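/- Let a structural causal model over a finite DAG G have vertex set V = C ∪ Z (continuous and discrete variables), and suppose intervention set I ⊆ V is such that all descendants of I lie in C, and for every j in C the map u_j ↦ f_j(pa_j, u_j) is injective. Then given a factual assignment x* of all variables, the abduction-action-prediction procedure yields a unique counterfactual value for every variable: variables outside desc(I) keep their factual values, intervened variables take the intervention values, and each descendant j ∈ desc(I) has its value uniquely determined by topological recursion x_j = f_j(pa_j^{cf}, u_j*) with u_j* the unique solution of f_j(pa_j^*, u_j*) = x_j*. -/
import Mathlib


open Set

open Classical in
noncomputable def buildX (D : ℕ) (f : Fin D → (Fin D → ℝ) → ℝ → ℝ)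
    (I desc : Set (Fin D)) (a xstar u : Fin D → ℝ) : Fin D → ℝ
  | j =>
    if j ∈ I then a j
    else if j ∈ desc then
      f j (fun i => if _h : i < j then buildX D f I desc a xstar u i else xstar i) (u j)
    else xstar j
  termination_by j => j.val
  decreasing_by exact _h

/-- Proposition 2 (counterfactual identifiability in mixed CGMs).
SCM over a finite DAG on `Fin D` (edges `E i j` only with `i < j`, i.e. a
topological order), vertices partitioned into continuous `C` and discrete `Z`.
Each mechanism `f j` depends only on the parents of `j`, and for every
continuous vertex the noise map is injective.  If all descendants of the
intervention set `I` are continuous, then the abduction–action–prediction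
procedure yields a unique counterfactual assignment: intervened variables take
the intervention values, non-descendants outside `I` keep their factual
values, and each other descendant is determined by the topological recursion
with the abducted (unique) exogenous value. -/
theorem stmt5 (D : ℕ) (E : Fin D → Fin D → Prop)
    (htopo : ∀ i j, E i j → i < j)
    (C Z : Set (Fin D)) (hpart : C ∪ Z = univ) (hdisj : Disjoint C Z)
    (f : Fin D → (Fin D → ℝ) → ℝ → ℝ)
    (hlocal : ∀ j x y u, (∀ i, E i j → x i = y i) → f j x u = f j y u)
    (hinj : ∀ j ∈ C, ∀ x, Function.Injective (fun u => f j x u))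
    (I : Set (Fin D)) (a : Fin D → ℝ)
    (desc : Set (Fin D)) (hdescdef : desc = {j | ∃ i ∈ I, Relation.TransGen E i j})
    (hdescC : desc ⊆ C)
    (xstar : Fin D → ℝ)
    (hfact : ∀ j, ∃ u, f j xstar u = xstar j) :
    ∃! xcf : Fin D → ℝ,
      (∀ j ∈ I, xcf j = a j) ∧
      (∀ j, j ∉ I → j ∉ desc → xcf j = xstar j) ∧
      (∀ j ∈ desc, j ∉ I →
        ∀ u : ℝ, f j xstar u = xstar j → xcf j = f j xcf u) := by
  classical
  set ustar : Fin D → ℝ := fun j => Classical.choose (hfact j) with hustar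
  have hspec : ∀ j, f j xstar (ustar j) = xstar j := fun j => Classical.choose_spec (hfact j)
  set xcf : Fin D → ℝ := buildX D f I desc a xstar ustar with hxcf
  have hI : ∀ j ∈ I, xcf j = a j := by
    intro j hj
    rw [hxcf, buildX, if_pos hj]
  have hN : ∀ j, j ∉ I → j ∉ desc → xcf j = xstar j := by
    intro j hj hd
    rw [hxcf, buildX, if_neg hj, if_neg hd]
  have hunfold : ∀ j ∈ desc, j ∉ I → xcf j = f j xcf (ustar j) := by
    intro j hd hj
    rw [hxcf]
    conv_lhs => rw [buildX]
    rw [if_neg hj, if_pos hd]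
    apply hlocal
    intro i hij
    have : i < j := htopo i j hij
    simp [this]
  have hD : ∀ j ∈ desc, j ∉ I → ∀ u : ℝ, f j xstar u = xstar j → xcf j = f j xcf u := by
    intro j hd hj u hu
    have hC : j ∈ C := hdescC hd
    have : u = ustar j := hinj j hC xstar (by simp only [hu, hspec])
    rw [this]
    exact hunfold j hd hj
  refine ⟨xcf, ⟨hI, hN, hD⟩, ?_⟩
  rintro y ⟨hyI, hyN, hyD⟩
  have key : ∀ n, ∀ j : Fin D, (j : ℕ) < n → y j = xcf j := by
    intro n
    induction n with
    | zero => intro j h; omega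
    | succ n ihn =>
      intro j hjn
      by_cases hj : j ∈ I
      · rw [hyI j hj, hI j hj]
      · by_cases hd : j ∈ desc
        · rw [hyD j hd hj (ustar j) (hspec j), hunfold j hd hj]
          apply hlocal
          intro i hij
          exact ihn i (by have := htopo i j hij; omega)
        · rw [hyN j hj hd, hN j hj hd]
  funext j
  exact key (j + 1) j (by omega)
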